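/- Let M be a compact oriented Riemannian manifold with boundary and X a Killing vector field tangent to ∂M. If ω is an invariant form with Δ_X ω = 0 and ω satisfies both Dirichlet conditions i*ω = 0 and i*(δ_X ω) = 0 on ∂M, then d_X ω = 0 and δ_X ω = 0, i.e., ω is an X-harmonic field. -/
import Mathlib

open RealInnerProductSpace

/-- An X-harmonic form satisfying the Dirichlet boundary conditions
i*ω = 0 and i*(δ_X ω) = 0 is an X-harmonic field. Abstract model: V is the space
of invariant forms with the L² inner product; dX, δX are Witten's operators
related by Green's formula ⟨d_X α, β⟩ = ⟨α, δ_X β⟩ + B(α,β), where the boundary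
pairing B(α,β) = ∫_{∂M} i*(α ∧ ⋆β) vanishes whenever the trace i*α vanishes
(`tr` is the trace/pullback to the boundary). -/
theorem harmonic_form_dirichlet_is_harmonic_field
    (V W : Type*) [NormedAddCommGroup V] [InnerProductSpace ℝ V]
    [AddCommGroup W] [Module ℝ W]
    (dX δX : V →ₗ[ℝ] V)
    (B : V →ₗ[ℝ] V →ₗ[ℝ] ℝ)
    (tr : V →ₗ[ℝ] W)
    (hgreen : ∀ α β : V, ⟪dX α, β⟫ = ⟪α, δX β⟫ + B α β)
    (htr : ∀ α β : V, tr α = 0 → B α β = 0)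
    (ω : V)
    (hharm : dX (δX ω) + δX (dX ω) = 0)
    (hdir₁ : tr ω = 0)
    (hdir₂ : tr (δX ω) = 0) :
    dX ω = 0 ∧ δX ω = 0 := by
  have h1 : ⟪dX (δX ω), ω⟫ = ‖δX ω‖ ^ 2 := by
    rw [hgreen, htr _ _ hdir₂, real_inner_self_eq_norm_sq, add_zero]
  have h2 : ⟪δX (dX ω), ω⟫ = ‖dX ω‖ ^ 2 := by
    have := hgreen ω (dX ω)
    rw [htr _ _ hdir₁, add_zero] at this
    rw [real_inner_comm, ← this, real_inner_self_eq_norm_sq]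
  have h0 : ‖δX ω‖ ^ 2 + ‖dX ω‖ ^ 2 = 0 := by
    rw [← h1, ← h2, ← inner_add_left, hharm, inner_zero_left]
  have hd : ‖dX ω‖ ^ 2 = 0 := by nlinarith [sq_nonneg ‖δX ω‖, sq_nonneg ‖dX ω‖]
  have hδ : ‖δX ω‖ ^ 2 = 0 := by nlinarith [sq_nonneg ‖δX ω‖, sq_nonneg ‖dX ω‖]
  exact ⟨norm_eq_zero.mp (pow_eq_zero_iff two_ne_zero |>.mp hd),
    norm_eq_zero.mp (pow_eq_zero_iff two_ne_zero |>.mp hδ)⟩
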